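/- arXiv:2206.12663 — 2 statements merged into one kernel-verified Lean document; each statement's English description precedes it below -/
import Mathlib

section
/- (Deterministic recursion lemma of Toulis type.) Let a_n > 0 with ∑ a_n = A < ∞, b_n ↓ 0, c_n ↓ 0, with c_n/b_n < 1 for all n > n'. Define δ_n = (1/a_n)(a_{n-1}/b_{n-1} − a_n/b_n) and ζ_n = (c_n/b_{n-1})(a_{n-1}/a_n), and suppose δ_n ↓ δ ≥ 0 and ζ_n ↓ 0. If a nonnegative sequence y_n satisfies y_n ≤ [(1 + c_n)/(1 + (1+δ)b_n)] y_{n-1} + a_n for all n ≥ 1, then there exist an integer n_0 and constants K_0 = [1 + (1+δ)b_1]/(1 + δ − δ_{n_0} − ζ_{n_0}), B = K_0 a_{n_0}/b_{n_0} such that y_n ≤ K_0 a_n/b_n + Q_1^n y_0 + Q_{n_0+1}^n[(1 + c_1)^{n_0} A + B] for every n, where Q_i^n = ∏_{j=i}^n (1 + c_j)/(1 + (1+δ)b_j) for n ≥ i and Q_i^n = 1 otherwise; here n_0 is any index with δ_n + ζ_n < 1 + δ and c_n < (1+δ)b_n for all n ≥ n_0. -/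
set_option maxHeartbeats 2000000 in
theorem toulis_recursion_lemma (a b c y : ℕ → ℝ) (A δ : ℝ) (n' : ℕ)
    (ha : ∀ n, 0 < a n)
    (hA : HasSum (fun k : ℕ => a (k + 1)) A)
    (hb_pos : ∀ n, 0 < b n) (hb_anti : Antitone b)
    (hb_lim : Filter.Tendsto b Filter.atTop (nhds 0))
    (hc_nonneg : ∀ n, 0 ≤ c n) (hc_anti : Antitone c)
    (hc_lim : Filter.Tendsto c Filter.atTop (nhds 0))
    (hcb : ∀ n, n' < n → c n / b n < 1)
    (hδ_nonneg : 0 ≤ δ)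
    (hδ_anti : AntitoneOn (fun n => (1 / a n) * (a (n - 1) / b (n - 1) - a n / b n))
      {n : ℕ | 1 ≤ n})
    (hδ_lim : Filter.Tendsto (fun n => (1 / a n) * (a (n - 1) / b (n - 1) - a n / b n))
      Filter.atTop (nhds δ))
    (hζ_anti : AntitoneOn (fun n => (c n / b (n - 1)) * (a (n - 1) / a n)) {n : ℕ | 1 ≤ n})
    (hζ_lim : Filter.Tendsto (fun n => (c n / b (n - 1)) * (a (n - 1) / a n))
      Filter.atTop (nhds 0))
    (hy : ∀ n, 0 ≤ y n)
    (hrec : ∀ n, 1 ≤ n → y n ≤ (1 + c n) / (1 + (1 + δ) * b n) * y (n - 1) + a n)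
    (n₀ : ℕ) (hn₀ : 1 ≤ n₀)
    (hn₀prop : ∀ n, n₀ ≤ n →
      (1 / a n) * (a (n - 1) / b (n - 1) - a n / b n)
        + (c n / b (n - 1)) * (a (n - 1) / a n) < 1 + δ ∧
      c n < (1 + δ) * b n) :
    ∀ n, 1 ≤ n →
      y n ≤
        ((1 + (1 + δ) * b 1) /
            (1 + δ - (1 / a n₀) * (a (n₀ - 1) / b (n₀ - 1) - a n₀ / b n₀)
              - (c n₀ / b (n₀ - 1)) * (a (n₀ - 1) / a n₀))) * (a n / b n)
        + (∏ j ∈ Finset.Icc 1 n, (1 + c j) / (1 + (1 + δ) * b j)) * y 0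
        + (∏ j ∈ Finset.Icc (n₀ + 1) n, (1 + c j) / (1 + (1 + δ) * b j)) *
            ((1 + c 1) ^ n₀ * A +
              ((1 + (1 + δ) * b 1) /
                  (1 + δ - (1 / a n₀) * (a (n₀ - 1) / b (n₀ - 1) - a n₀ / b n₀)
                    - (c n₀ / b (n₀ - 1)) * (a (n₀ - 1) / a n₀))) * (a n₀ / b n₀)) := by
  have hδ1 : (0:ℝ) < 1 + δ := by linarith
  have hbne : ∀ n, b n ≠ 0 := fun n => (hb_pos n).ne'
  have hane : ∀ n, a n ≠ 0 := fun n => (ha n).ne'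
  have hden_pos : ∀ n, 0 < 1 + (1 + δ) * b n := fun n => by nlinarith [hb_pos n]
  have hq_pos : ∀ n, 0 < (1 + c n) / (1 + (1 + δ) * b n) := fun n =>
    div_pos (by linarith [hc_nonneg n]) (hden_pos n)
  have hc1 : (0:ℝ) ≤ c 1 := hc_nonneg 1
  have hc1' : (1:ℝ) ≤ 1 + c 1 := by linarith
  have hq_le : ∀ n, 1 ≤ n → (1 + c n) / (1 + (1 + δ) * b n) ≤ 1 + c 1 := by
    intro n hn
    have h1 : c n ≤ c 1 := hc_anti hn
    rw [div_le_iff₀ (hden_pos n)]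
    have ht : (0:ℝ) ≤ (1 + c 1) * ((1 + δ) * b n) :=
      mul_nonneg (by linarith) (mul_nonneg hδ1.le (hb_pos n).le)
    nlinarith [ht]
  -- partial sums
  have hS_nonneg : ∀ n, (0:ℝ) ≤ ∑ k ∈ Finset.Icc 1 n, a k :=
    fun n => Finset.sum_nonneg fun k _ => (ha k).le
  have hS_le_A : ∀ n, ∑ k ∈ Finset.Icc 1 n, a k ≤ A := by
    intro n
    have h1 : ∑ k ∈ Finset.Icc 1 n, a k = ∑ k ∈ Finset.range n, a (k + 1) := by
      rw [← Finset.Ico_add_one_right_eq_Icc, Finset.sum_Ico_eq_sum_range]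
      simp [add_comm]
    rw [h1]
    exact sum_le_hasSum _ (fun i _ => (ha _).le) hA
  have hA_nonneg : (0:ℝ) ≤ A := le_trans (hS_nonneg 1) (hS_le_A 1)
  -- unrolled bound
  have hP : ∀ n, y n ≤ (∏ j ∈ Finset.Icc 1 n, (1 + c j) / (1 + (1 + δ) * b j)) * y 0
      + (1 + c 1) ^ n * ∑ k ∈ Finset.Icc 1 n, a k := by
    intro n
    induction n with
    | zero => simp
    | succ n ih =>
      have hrecn := hrec (n + 1) (by omega)
      simp only [Nat.add_sub_cancel] at hrecn
      have hqn := hq_pos (n + 1)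
      have h2 : y (n + 1) ≤ (1 + c (n+1)) / (1 + (1 + δ) * b (n+1)) *
          ((∏ j ∈ Finset.Icc 1 n, (1 + c j) / (1 + (1 + δ) * b j)) * y 0
            + (1 + c 1) ^ n * ∑ k ∈ Finset.Icc 1 n, a k) + a (n + 1) :=
        le_trans hrecn (by
          have := mul_le_mul_of_nonneg_left ih hqn.le
          linarith)
      have hprod : ∏ j ∈ Finset.Icc 1 (n+1), (1 + c j) / (1 + (1 + δ) * b j)
          = (∏ j ∈ Finset.Icc 1 n, (1 + c j) / (1 + (1 + δ) * b j)) *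
            ((1 + c (n+1)) / (1 + (1 + δ) * b (n+1))) :=
        Finset.prod_Icc_succ_top (by omega) _
      have hSsucc : ∑ k ∈ Finset.Icc 1 (n+1), a k
          = (∑ k ∈ Finset.Icc 1 n, a k) + a (n+1) :=
        Finset.sum_Icc_succ_top (by omega) _
      rw [hprod, hSsucc]
      have hq1 := hq_le (n+1) (by omega)
      have hpow1 : (1:ℝ) ≤ (1 + c 1) ^ n := one_le_pow₀ hc1'
      have hpow1' : (1:ℝ) ≤ (1 + c 1) ^ (n+1) := one_le_pow₀ hc1'
      have hpowsucc : (1 + c 1) ^ (n+1) = (1 + c 1) ^ n * (1 + c 1) := pow_succ _ _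
      have key1 : (1 + c (n+1)) / (1 + (1 + δ) * b (n+1)) * ((1 + c 1) ^ n *
          ∑ k ∈ Finset.Icc 1 n, a k) ≤ (1 + c 1) ^ (n+1) * ∑ k ∈ Finset.Icc 1 n, a k := by
        rw [hpowsucc]
        calc (1 + c (n+1)) / (1 + (1 + δ) * b (n+1)) * ((1 + c 1) ^ n *
              ∑ k ∈ Finset.Icc 1 n, a k)
            ≤ (1 + c 1) * ((1 + c 1) ^ n * ∑ k ∈ Finset.Icc 1 n, a k) :=
              mul_le_mul_of_nonneg_right hq1
                (mul_nonneg (pow_nonneg (by linarith) n) (hS_nonneg n))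
          _ = (1 + c 1) ^ n * (1 + c 1) * ∑ k ∈ Finset.Icc 1 n, a k := by ring
      have key2 : a (n+1) ≤ (1 + c 1) ^ (n+1) * a (n+1) := by
        nlinarith [ha (n+1)]
      nlinarith [h2, key1, key2]
  -- constants
  obtain ⟨D, hD⟩ : ∃ x : ℝ, x = 1 + δ - (1 / a n₀) * (a (n₀ - 1) / b (n₀ - 1) - a n₀ / b n₀)
      - (c n₀ / b (n₀ - 1)) * (a (n₀ - 1) / a n₀) := ⟨_, rfl⟩
  have hD_pos : 0 < D := by
    have := (hn₀prop n₀ le_rfl).1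
    rw [hD]; linarith
  obtain ⟨K, hK⟩ : ∃ x : ℝ, x = (1 + (1 + δ) * b 1) / D := ⟨_, rfl⟩
  have hnum_pos : 0 < 1 + (1 + δ) * b 1 := hden_pos 1
  have hK_pos : 0 < K := hK ▸ div_pos hnum_pos hD_pos
  have hKD : K * D = 1 + (1 + δ) * b 1 := by
    rw [hK]; field_simp
  have hKab_nonneg : ∀ n, 0 ≤ K * (a n / b n) := fun n =>
    mul_nonneg hK_pos.le (div_nonneg (ha n).le (hb_pos n).le)
  obtain ⟨C, hC⟩ : ∃ x : ℝ, x = (1 + c 1) ^ n₀ * A + K * (a n₀ / b n₀) := ⟨_, rfl⟩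
  have hC_ge : ∀ n, n ≤ n₀ → (1 + c 1) ^ n * ∑ k ∈ Finset.Icc 1 n, a k ≤ C := by
    intro n hn
    rw [hC]
    have h1 : (1 + c 1) ^ n ≤ (1 + c 1) ^ n₀ := pow_le_pow_right₀ hc1' hn
    have h2 := hS_le_A n
    have h3 := hS_nonneg n
    nlinarith [hKab_nonneg n₀, pow_nonneg (by linarith : (0:ℝ) ≤ 1 + c 1) n₀,
      pow_nonneg (by linarith : (0:ℝ) ≤ 1 + c 1) n]
  -- main induction for n ≥ n₀
  have main : ∀ n, n₀ ≤ n → y n ≤ K * (a n / b n)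
      + (∏ j ∈ Finset.Icc 1 n, (1 + c j) / (1 + (1 + δ) * b j)) * y 0
      + (∏ j ∈ Finset.Icc (n₀ + 1) n, (1 + c j) / (1 + (1 + δ) * b j)) * C := by
    intro n hn
    induction n, hn using Nat.le_induction with
    | base =>
      have h1 := hP n₀
      have h2 : (∏ j ∈ Finset.Icc (n₀ + 1) n₀, (1 + c j) / (1 + (1 + δ) * b j)) = 1 := by
        rw [Finset.Icc_eq_empty (by omega), Finset.prod_empty]
      rw [h2, one_mul]
      have h3 := hC_ge n₀ le_rfl
      linarith [hKab_nonneg n₀]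
    | succ n hn ih =>
      have hm : n₀ ≤ n + 1 := by omega
      -- monotonicity of δ_n, ζ_n
      have hmem1 : n₀ ∈ {k : ℕ | 1 ≤ k} := hn₀
      have hmem2 : (n + 1) ∈ {k : ℕ | 1 ≤ k} := by simp
      have hδle := hδ_anti hmem1 hmem2 hm
      have hζle := hζ_anti hmem1 hmem2 hm
      simp only [Nat.add_sub_cancel] at hδle hζle
      obtain ⟨dm, hdm⟩ : ∃ x : ℝ, x = (1 / a (n+1)) * (a n / b n - a (n+1) / b (n+1)) :=
        ⟨_, rfl⟩
      obtain ⟨zm, hzm⟩ : ∃ x : ℝ, x = (c (n+1) / b n) * (a n / a (n+1)) := ⟨_, rfl⟩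
      rw [← hdm] at hδle
      rw [← hzm] at hζle
      have id1 : a (n+1) * dm = a n / b n - a (n+1) / b (n+1) := by
        rw [hdm, ← mul_assoc, mul_one_div, div_self (hane (n+1)), one_mul]
      have id2 : a (n+1) * zm = c (n+1) * (a n / b n) := by
        rw [hzm]; field_simp [hane (n+1), hbne n]
      have h1 : D ≤ 1 + δ - dm - zm := by rw [hD]; linarith
      have hb1 : b (n+1) ≤ b 1 := hb_anti (by omega)
      have h3 : 1 + (1 + δ) * b (n+1) ≤ K * (1 + δ - dm - zm) := by
        have h4 : K * D ≤ K * (1 + δ - dm - zm) := mul_le_mul_of_nonneg_left h1 hK_pos.le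
        rw [hKD] at h4
        nlinarith
      have hbY : a (n+1) / b (n+1) * b (n+1) = a (n+1) := div_mul_cancel₀ _ (hbne (n+1))
      have goal_eq : K * (a (n+1) / b (n+1)) * (1 + (1 + δ) * b (n+1)) -
          ((1 + c (n+1)) * (K * (a n / b n)) + a (n+1) * (1 + (1 + δ) * b (n+1)))
          = a (n+1) * (K * (1 + δ - dm - zm)) - a (n+1) * (1 + (1 + δ) * b (n+1)) := by
        linear_combination ((1 + δ) * K) * hbY + K * id1 + K * id2
      have h4 : a (n+1) * (1 + (1 + δ) * b (n+1)) ≤ a (n+1) * (K * (1 + δ - dm - zm)) :=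
        mul_le_mul_of_nonneg_left h3 (ha (n+1)).le
      have hkey : (1 + c (n+1)) / (1 + (1 + δ) * b (n+1)) * (K * (a n / b n)) + a (n+1)
          ≤ K * (a (n+1) / b (n+1)) := by
        rw [div_mul_eq_mul_div, div_add' _ _ _ (hden_pos (n+1)).ne',
          div_le_iff₀ (hden_pos (n+1))]
        linarith [goal_eq, h4]
      -- recursion step
      have hrecn := hrec (n + 1) (by omega)
      simp only [Nat.add_sub_cancel] at hrecn
      have hih := mul_le_mul_of_nonneg_left ih (hq_pos (n+1)).le
      have hprod1 : ∏ j ∈ Finset.Icc 1 (n+1), (1 + c j) / (1 + (1 + δ) * b j)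
          = (∏ j ∈ Finset.Icc 1 n, (1 + c j) / (1 + (1 + δ) * b j)) *
            ((1 + c (n+1)) / (1 + (1 + δ) * b (n+1))) :=
        Finset.prod_Icc_succ_top (by omega) _
      have hprod2 : ∏ j ∈ Finset.Icc (n₀+1) (n+1), (1 + c j) / (1 + (1 + δ) * b j)
          = (∏ j ∈ Finset.Icc (n₀+1) n, (1 + c j) / (1 + (1 + δ) * b j)) *
            ((1 + c (n+1)) / (1 + (1 + δ) * b (n+1))) :=
        Finset.prod_Icc_succ_top (by omega) _
      rw [hprod1, hprod2]
      calc y (n+1) ≤ (1 + c (n+1)) / (1 + (1 + δ) * b (n+1)) * y n + a (n+1) := hrecn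
        _ ≤ (1 + c (n+1)) / (1 + (1 + δ) * b (n+1)) * (K * (a n / b n)
              + (∏ j ∈ Finset.Icc 1 n, (1 + c j) / (1 + (1 + δ) * b j)) * y 0
              + (∏ j ∈ Finset.Icc (n₀ + 1) n, (1 + c j) / (1 + (1 + δ) * b j)) * C)
            + a (n+1) := by linarith
        _ = ((1 + c (n+1)) / (1 + (1 + δ) * b (n+1)) * (K * (a n / b n)) + a (n+1))
            + (∏ j ∈ Finset.Icc 1 n, (1 + c j) / (1 + (1 + δ) * b j)) *
                ((1 + c (n+1)) / (1 + (1 + δ) * b (n+1))) * y 0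
            + (∏ j ∈ Finset.Icc (n₀ + 1) n, (1 + c j) / (1 + (1 + δ) * b j)) *
                ((1 + c (n+1)) / (1 + (1 + δ) * b (n+1))) * C := by ring
        _ ≤ _ := by linarith
  -- conclusion
  intro n hn1
  rw [← hD, ← hK, ← hC]
  rcases le_or_gt n₀ n with h | h
  · exact main n h
  · have h1 := hP n
    have h2 : (∏ j ∈ Finset.Icc (n₀ + 1) n, (1 + c j) / (1 + (1 + δ) * b j)) = 1 := by
      rw [Finset.Icc_eq_empty (by omega), Finset.prod_empty]
    rw [h2, one_mul]
    have h3 := hC_ge n h.le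
    linarith [hKab_nonneg n]
end

section
/- Let α > γ with α > 1 and γ ∈ (0,1], and suppose a nonnegative sequence satisfies y_n ≤ (1 − η n^{-γ}) y_{n-1} + a_1 n^{-α} with η > 0 and a_1 ≥ 0, assuming η > α − γ when γ = 1. Then there exist constants K_1 ≥ 0, D ≥ 0 (depending only on η, α, γ, a_1, and an explicit index n_0) such that y_n ≤ K_1 n^{-(α−γ)} + exp(−(1/2) log(1+η) φ_γ(n)) (y_0 + D) for all n ≥ 1, where φ_γ(n) = (n^{1-γ}−1)/(1−γ) for γ ∈ (0,1) and φ_1(n) = log n. -/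
noncomputable def phi (γ : ℝ) (n : ℕ) : ℝ :=
  if γ < 1 then ((n : ℝ) ^ (1 - γ) - 1) / (1 - γ) else Real.log n

/-!
Write `p = α - γ` and `w n = (n + 1)^(-γ)`. The ratio `(1 + 1/n)^p ≤ 1 + p/(n - p)` of consecutive
terms of `n^(-p)` exceeds `1` by about `p/n`, which is eventually at most `θ w n` for some `θ < η`:
any `θ ∈ (0, η)` when `γ < 1`, and any `θ ∈ (p, η)` when `γ = 1`. Hence once `η w n ≤ 1`, the
sequence `K n^(-p)` is a supersolution of the recursion for every `K` with `a₁ ≤ K (η - θ)`.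
Enlarging `K` to dominate `y k k^p` for the finitely many `k` before this regime, induction gives
`y n ≤ K n^(-p)` for all `n ≥ 1`, so the bound holds with `D = 0`, the exponential term being
nonnegative.
-/

open Filter Real

theorem exists_forall_le_mul_of_eventually_step {y u : ℕ → ℝ} (hu : ∀ n, 1 ≤ n → 0 < u n)
    (K₀ : ℝ) (hstep : ∀ᶠ n in atTop, ∀ K, K₀ ≤ K → y n ≤ K * u n → y (n + 1) ≤ K * u (n + 1)) :
    ∃ K, K₀ ≤ K ∧ ∀ n, 1 ≤ n → y n ≤ K * u n := by
  obtain ⟨N, hN⟩ := eventually_atTop.mp (hstep.and (eventually_ge_atTop 1))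
  obtain ⟨B, hB⟩ := ((Set.finite_Iic N).image fun k => y k / u k).bddAbove
  have hinit : ∀ n, 1 ≤ n → n ≤ N → y n ≤ max K₀ B * u n := fun n hn hnN => by
    have hyB : y n / u n ≤ B := hB ⟨n, hnN, rfl⟩
    rw [div_le_iff₀ (hu n hn)] at hyB
    exact hyB.trans (mul_le_mul_of_nonneg_right (le_max_right _ _) (hu n hn).le)
  refine ⟨max K₀ B, le_max_left _ _, fun n hn => ?_⟩
  rcases le_total n N with hnN | hNn
  · exact hinit n hn hnN
  · clear hn
    induction n, hNn using Nat.le_induction with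
    | base => exact hinit N (hN N le_rfl).2 le_rfl
    | succ n hNn ih => exact (hN n hNn).1 _ (le_max_left _ _) ih

theorem one_add_inv_rpow_le {p x : ℝ} (hp : 0 ≤ p) (hpx : p < x) :
    (1 + x⁻¹) ^ p ≤ 1 + p / (x - p) := by
  have hx : 0 < x := hp.trans_lt hpx
  calc (1 + x⁻¹) ^ p ≤ exp x⁻¹ ^ p := by
        gcongr
        linarith [add_one_le_exp x⁻¹]
    _ = exp (p / x) := by rw [← exp_mul, div_eq_mul_inv, mul_comm]
    _ ≤ 1 / (1 - p / x) := exp_bound_div_one_sub_of_interval (by positivity)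
        ((div_lt_one hx).mpr hpx)
    _ = 1 + p / (x - p) := by
        field_simp [(sub_pos.mpr hpx).ne']
        ring

theorem eventually_mul_add_one_le_mul_sub {a b : ℝ} (c : ℝ) (hab : a < b) :
    ∀ᶠ x : ℝ in atTop, a * (x + 1) ≤ b * (x - c) := by
  filter_upwards [eventually_ge_atTop ((a + b * c) / (b - a))] with x hx
  rw [div_le_iff₀ (sub_pos.mpr hab)] at hx
  linarith

theorem eventually_rpow_le_mul_add_one {γ c : ℝ} (hγ : γ < 1) (hc : 0 < c) :
    ∀ᶠ x : ℝ in atTop, (x + 1) ^ γ ≤ c * (x + 1) := by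
  have hlim : Tendsto (fun x : ℝ => (x + 1) ^ (-(1 - γ))) atTop (nhds 0) :=
    (tendsto_rpow_neg_atTop (sub_pos.mpr hγ)).comp (tendsto_atTop_add_const_right _ 1 tendsto_id)
  filter_upwards [hlim.eventually_le_const hc, eventually_gt_atTop 0] with x hxc hx
  calc (x + 1) ^ γ = (x + 1) ^ (-(1 - γ)) * (x + 1) := by
        rw [← rpow_add_one (by positivity)]
        ring_nf
    _ ≤ c * (x + 1) := by gcongr

theorem eventually_mul_rpow_le_mul_sub {p γ θ : ℝ} (hp : 0 < p) (hγ1 : γ ≤ 1) (hθ : 0 < θ)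
    (hpθ : γ = 1 → p < θ) : ∀ᶠ x : ℝ in atTop, p * (x + 1) ^ γ ≤ θ * (x - p) := by
  obtain ⟨c, hpc, hc⟩ : ∃ c, p * c < θ ∧ ∀ᶠ x : ℝ in atTop, (x + 1) ^ γ ≤ c * (x + 1) := by
    rcases hγ1.lt_or_eq with hγ1 | rfl
    · refine ⟨θ / (2 * p), by field_simp; linarith, ?_⟩
      exact eventually_rpow_le_mul_add_one hγ1 (by positivity)
    · exact ⟨1, by simpa using hpθ rfl, .of_forall fun x => by simp⟩
  filter_upwards [hc, eventually_mul_add_one_le_mul_sub p hpc] with x hxc hx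
  calc p * (x + 1) ^ γ ≤ p * (c * (x + 1)) := by gcongr
    _ = p * c * (x + 1) := by ring
    _ ≤ θ * (x - p) := hx

theorem eventually_one_add_inv_rpow_le {p γ θ : ℝ} (hp : 0 < p) (hγ1 : γ ≤ 1) (hθ : 0 < θ)
    (hpθ : γ = 1 → p < θ) : ∀ᶠ x : ℝ in atTop, (1 + x⁻¹) ^ p ≤ 1 + θ * (x + 1) ^ (-γ) := by
  filter_upwards [eventually_mul_rpow_le_mul_sub hp hγ1 hθ hpθ, eventually_gt_atTop p]
    with x hx hpx
  have hx1 : 0 < x + 1 := by linarith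
  calc (1 + x⁻¹) ^ p ≤ 1 + p / (x - p) := one_add_inv_rpow_le hp.le hpx
    _ ≤ 1 + θ * (x + 1) ^ (-γ) := by
        gcongr 1 + ?_
        rw [rpow_neg hx1.le, div_le_iff₀ (sub_pos.mpr hpx)]
        field_simp
        linarith

theorem eventually_mul_add_one_rpow_neg_le_one (η : ℝ) {γ : ℝ} (hγ : 0 < γ) :
    ∀ᶠ x : ℝ in atTop, η * (x + 1) ^ (-γ) ≤ 1 := by
  have hlim : Tendsto (fun x : ℝ => η * (x + 1) ^ (-γ)) atTop (nhds 0) := by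
    simpa using ((tendsto_rpow_neg_atTop hγ).comp
      (tendsto_atTop_add_const_right _ 1 tendsto_id)).const_mul η
  exact hlim.eventually_le_const one_pos

theorem one_sub_mul_rpow_neg_add_le {η θ γ α K a x : ℝ} (hx : 0 < x) (hK : 0 ≤ K) (hη : 0 ≤ η)
    (hθ : 0 ≤ θ) (ha : a ≤ K * (η - θ)) (hw : η * (x + 1) ^ (-γ) ≤ 1)
    (hr : (1 + x⁻¹) ^ (α - γ) ≤ 1 + θ * (x + 1) ^ (-γ)) :
    (1 - η * (x + 1) ^ (-γ)) * (K * x ^ (-(α - γ))) + a * (x + 1) ^ (-α) ≤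
      K * (x + 1) ^ (-(α - γ)) := by
  have hx1 : 0 < x + 1 := by linarith
  have hxq : x ^ (-(α - γ)) = (1 + x⁻¹) ^ (α - γ) * (x + 1) ^ (-(α - γ)) := by
    rw [rpow_neg hx.le, rpow_neg hx1.le, ← div_eq_mul_inv, ← div_rpow (by positivity) hx1.le,
      ← inv_rpow hx.le]
    congr 1
    field_simp
  have hwq : (x + 1) ^ (-α) = (x + 1) ^ (-γ) * (x + 1) ^ (-(α - γ)) := by
    rw [← rpow_add hx1]
    ring_nf
  have hw0 : 0 ≤ (x + 1) ^ (-γ) := by positivity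
  have hq0 : 0 ≤ (x + 1) ^ (-(α - γ)) := by positivity
  have hmul := mul_le_mul_of_nonneg_left hr (mul_nonneg (sub_nonneg.mpr hw) hK)
  rw [hxq, hwq]
  nlinarith [mul_nonneg (mul_nonneg hK (mul_nonneg hη hθ)) (mul_nonneg hw0 hw0),
    mul_le_mul_of_nonneg_right ha hw0]

theorem toulis_recursion_corollary_general (η a₁ α γ : ℝ) (hαγ : γ < α)
    (hγ : 0 < γ) (hγ1 : γ ≤ 1) (hη : 0 < η) (ha₁ : 0 ≤ a₁)
    (hη1 : γ = 1 → α - γ < η)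
    (y : ℕ → ℝ) (hy : ∀ n, 0 ≤ y n)
    (hrec : ∀ n : ℕ, 1 ≤ n →
      y n ≤ (1 - η * (n : ℝ) ^ (-γ)) * y (n - 1) + a₁ * (n : ℝ) ^ (-α)) :
    ∃ K₁ D : ℝ, 0 ≤ K₁ ∧ 0 ≤ D ∧ ∀ n : ℕ, 1 ≤ n →
      y n ≤ K₁ * (n : ℝ) ^ (-(α - γ)) +
        Real.exp (-(1 / 2) * Real.log (1 + η) * phi γ n) * (y 0 + D) := by
  have hp : 0 < α - γ := sub_pos.mpr hαγ
  obtain ⟨θ, hθ, hθη, hpθ⟩ : ∃ θ, 0 < θ ∧ θ < η ∧ (γ = 1 → α - γ < θ) := by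
    by_cases hγ_eq : γ = 1
    · obtain ⟨θ, hpθ, hθη⟩ := exists_between (hη1 hγ_eq)
      exact ⟨θ, hp.trans hpθ, hθη, fun _ => hpθ⟩
    · exact ⟨η / 2, by positivity, by linarith, fun h => absurd h hγ_eq⟩
  have hstep : ∀ᶠ n : ℕ in atTop, ∀ K, a₁ / (η - θ) ≤ K →
      y n ≤ K * (n : ℝ) ^ (-(α - γ)) → y (n + 1) ≤ K * ((n + 1 : ℕ) : ℝ) ^ (-(α - γ)) := by
    filter_upwards [tendsto_natCast_atTop_atTop.eventually
      ((eventually_one_add_inv_rpow_le hp hγ1 hθ hpθ).and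
        ((eventually_mul_add_one_rpow_neg_le_one η hγ).and (eventually_gt_atTop 0)))]
      with n ⟨hr, hw, hn⟩ K hK hyn
    have hK0 : 0 ≤ K := (div_nonneg ha₁ (by linarith)).trans hK
    calc y (n + 1) ≤ (1 - η * ((n : ℝ) + 1) ^ (-γ)) * y n + a₁ * ((n : ℝ) + 1) ^ (-α) := by
          simpa using hrec (n + 1) (by omega)
      _ ≤ (1 - η * ((n : ℝ) + 1) ^ (-γ)) * (K * (n : ℝ) ^ (-(α - γ))) +
            a₁ * ((n : ℝ) + 1) ^ (-α) := by gcongr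
      _ ≤ K * ((n + 1 : ℕ) : ℝ) ^ (-(α - γ)) := by
          push_cast
          exact one_sub_mul_rpow_neg_add_le hn hK0 hη.le hθ.le
            ((div_le_iff₀ (by linarith)).mp hK) hw hr
  obtain ⟨K, hK, hyK⟩ := exists_forall_le_mul_of_eventually_step
    (fun n hn => by positivity) _ hstep
  refine ⟨K, 0, (div_nonneg ha₁ (by linarith)).trans hK, le_rfl, fun n hn => ?_⟩
  have hexp : 0 ≤ Real.exp (-(1 / 2) * Real.log (1 + η) * phi γ n) * (y 0 + 0) := by
    have := hy 0
    positivity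
  linarith [hyK n hn]

theorem toulis_recursion_corollary (η a₁ α γ : ℝ) (hα1 : 1 < α) (hαγ : γ < α)
    (hγ : 0 < γ) (hγ1 : γ ≤ 1) (hη : 0 < η) (ha₁ : 0 ≤ a₁)
    (hη1 : γ = 1 → α - γ < η)
    (y : ℕ → ℝ) (hy : ∀ n, 0 ≤ y n)
    (hrec : ∀ n : ℕ, 1 ≤ n →
      y n ≤ (1 - η * (n : ℝ) ^ (-γ)) * y (n - 1) + a₁ * (n : ℝ) ^ (-α)) :
    ∃ K₁ D : ℝ, 0 ≤ K₁ ∧ 0 ≤ D ∧ ∀ n : ℕ, 1 ≤ n →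
      y n ≤ K₁ * (n : ℝ) ^ (-(α - γ)) +
        Real.exp (-(1 / 2) * Real.log (1 + η) * phi γ n) * (y 0 + D) :=
  toulis_recursion_corollary_general η a₁ α γ hαγ hγ hγ1 hη ha₁ hη1 y hy hrec
end
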